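/- Let D ⊂ ℂ be a domain and p a C^{1,1}-smooth boundary point of D. Then limsup_{D ∋ z → p} | γ_D(z;1) − 1/(2δ_D(z)) | < ∞, where γ_D is the Carathéodory metric of D evaluated at the unit vector. -/

import Mathlib

open Complex Metric Set MeasureTheory Filter Bornology Module
open scoped Real Topology

noncomputable section

/-- Lebesgue measure on `ℂⁿ`. -/
noncomputable instance euclideanComplexMeasurableSpace {n : ℕ} :
    MeasurableSpace (EuclideanSpace ℂ (Fin n)) := borel _

instance euclideanComplexBorel {n : ℕ} :
    BorelSpace (EuclideanSpace ℂ (Fin n)) := ⟨rfl⟩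

noncomputable instance euclideanComplexMeasureSpace {n : ℕ} :
    MeasureSpace (EuclideanSpace ℂ (Fin n)) :=
  letI : InnerProductSpace ℝ (EuclideanSpace ℂ (Fin n)) := InnerProductSpace.complexToReal
  measureSpaceOfInnerProductSpace

variable {E : Type*} [NormedAddCommGroup E] [NormedSpace ℂ E]

/-- The Kobayashi infinitesimal (pseudo)metric of `Ω` at `z` in direction `X`. -/
def kob (Ω : Set E) (z X : E) : ℝ :=
  sInf {r : ℝ | ∃ t : ℂ, r = ‖t‖ ∧ ∃ φ : ℂ → E,
    DifferentiableOn ℂ φ (ball (0 : ℂ) 1) ∧ MapsTo φ (ball (0 : ℂ) 1) Ω ∧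
    φ 0 = z ∧ t • deriv φ 0 = X}

/-- The Carathéodory infinitesimal (pseudo)metric of `Ω` at `z` in direction `X`. -/
def cara (Ω : Set E) (z X : E) : ℝ :=
  sSup {r : ℝ | ∃ f : E → ℂ, DifferentiableOn ℂ f Ω ∧
    MapsTo f Ω (ball (0 : ℂ) 1) ∧ r = ‖fderiv ℂ f z X‖}

/-- The square root of the Bergman kernel of `Ω` on the diagonal. -/
def bker (Ω : Set E) [MeasureSpace E] (z : E) : ℝ :=
  sSup {r : ℝ | ∃ f : E → ℂ, DifferentiableOn ℂ f Ω ∧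
    (∫ w in Ω, ‖f w‖ ^ 2) ≤ 1 ∧ r = ‖f z‖}

/-- `m_Ω(z;X)`, the numerator in the definition of the Bergman metric. -/
def bm (Ω : Set E) [MeasureSpace E] (z X : E) : ℝ :=
  sSup {r : ℝ | ∃ f : E → ℂ, DifferentiableOn ℂ f Ω ∧
    (∫ w in Ω, ‖f w‖ ^ 2) = 1 ∧ f z = 0 ∧ r = ‖fderiv ℂ f z X‖}

/-- The Bergman metric `β_Ω(z;X) = m_Ω(z;X)/k_Ω(z)`. -/
def bmet (Ω : Set E) [MeasureSpace E] (z X : E) : ℝ := bm Ω z X / bker Ω z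

/-- `∂ρ(q)(X) = Σ_j ∂ρ/∂z_j(q) X_j` for a real-valued function `ρ`. -/
def cDer (ρ : E → ℝ) (q X : E) : ℂ :=
  (fderiv ℝ ρ q X : ℂ) / 2 - Complex.I * (fderiv ℝ ρ q (Complex.I • X) : ℂ) / 2

/-- The complex tangent space at `q` of the level set of `ρ`, as a set:
`{X : Σ_j ∂ρ/∂z_j(q) X_j = 0}`. -/
def cTan (ρ : E → ℝ) (q : E) : Set E := {X | cDer ρ q X = 0}

/-- The real Hessian of `ρ` at `q`, applied to `X, Y`. -/
def hess (ρ : E → ℝ) (q X Y : E) : ℝ :=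
  fderiv ℝ (fun w => fderiv ℝ ρ w Y) q X

/-- The Levi (Hermitian) form `Σ_{j,k} ∂²ρ/∂z_j∂z̄_k(q) X_j conj (Y_k)`,
expressed through the real Hessian of `ρ`. -/
def levi (ρ : E → ℝ) (q X Y : E) : ℂ :=
  (((hess ρ q X Y + hess ρ q (Complex.I • X) (Complex.I • Y) : ℝ) : ℂ) +
    Complex.I * ((hess ρ q X (Complex.I • Y) - hess ρ q (Complex.I • X) Y : ℝ) : ℂ)) / 4

/-- The rank of the Levi form at `q`: the dimension of the complex tangent space
minus the dimension of the kernel of the Levi form restricted to it. -/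
def leviRank (ρ : E → ℝ) (q : E) : ℕ :=
  finrank ℂ (Submodule.span ℂ (cTan ρ q)) -
    finrank ℂ (Submodule.span ℂ
      {X | X ∈ cTan ρ q ∧ ∀ Y ∈ cTan ρ q, levi ρ q X Y = 0})

/-- `ρ` is a local `C²` defining function for `Ω` near `p`, on the open set `U`. -/
def IsDefining2 (Ω : Set E) (p : E) (U : Set E) (ρ : E → ℝ) : Prop :=
  IsOpen U ∧ p ∈ U ∧ ContDiffOn ℝ 2 ρ U ∧ (∀ q ∈ U, fderiv ℝ ρ q ≠ 0) ∧
    Ω ∩ U = {z ∈ U | ρ z < 0}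

/-- `ρ` is a local `C^∞` defining function for `Ω` near `p`, on the open set `U`. -/
def IsDefiningSmooth (Ω : Set E) (p : E) (U : Set E) (ρ : E → ℝ) : Prop :=
  IsOpen U ∧ p ∈ U ∧ ContDiffOn ℝ (⊤ : ℕ∞) ρ U ∧ (∀ q ∈ U, fderiv ℝ ρ q ≠ 0) ∧
    Ω ∩ U = {z ∈ U | ρ z < 0}

/-- `ρ` is a local `C^{1,1}` defining function for `Ω` near `p`:
`C¹` with Lipschitz, nonvanishing gradient. -/
def IsDefining11 (Ω : Set E) (p : E) (U : Set E) (ρ : E → ℝ) : Prop :=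
  IsOpen U ∧ p ∈ U ∧ ContDiffOn ℝ 1 ρ U ∧
    (∃ K : NNReal, LipschitzOnWith K (fun z => fderiv ℝ ρ z) U) ∧
    (∀ q ∈ U, fderiv ℝ ρ q ≠ 0) ∧ Ω ∩ U = {z ∈ U | ρ z < 0}

/-- The boundary of `Ω` is Levi flat on `U`, w.r.t. the defining function `ρ`:
the Levi form vanishes on the complex tangent space at every boundary point in `U`. -/
def LeviFlatOn (Ω : Set E) (U : Set E) (ρ : E → ℝ) : Prop :=
  ∀ q ∈ frontier Ω ∩ U, ∀ X ∈ cTan ρ q, levi ρ q X X = 0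

/-- `q` is a nearest boundary point to `z`. -/
def IsNearest (Ω : Set E) (z q : E) : Prop :=
  q ∈ frontier Ω ∧ dist z q = infDist z Ωᶜ

/-- `ν` is the inner unit normal to `∂Ω` at the boundary point `q`. -/
def IsInnerNormal (Ω : Set E) (q ν : E) : Prop :=
  ‖ν‖ = 1 ∧ ∃ t₀ > 0, ∀ t : ℝ, 0 < t → t < t₀ →
    q + t • ν ∈ Ω ∧ infDist (q + t • ν) Ωᶜ = t

/-- `u` is plurisubharmonic on `Ω`: upper semicontinuous and satisfying the
sub-mean value inequality along every complex line. -/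
def PSHOn (u : E → ℝ) (Ω : Set E) : Prop :=
  UpperSemicontinuousOn u Ω ∧
  ∀ a b : E, ∀ r : ℝ, 0 < r → (∀ t : ℂ, ‖t‖ ≤ r → a + t • b ∈ Ω) →
    u a ≤ (1 / (2 * π)) *
      ∫ θ in (0 : ℝ)..(2 * π), u (a + (((r : ℂ) * Complex.exp ((θ : ℂ) * Complex.I))) • b)

/-- `Ω` is pseudoconvex: `-log δ_Ω` is plurisubharmonic on `Ω`. -/
def Pseudoconvex (Ω : Set E) : Prop :=
  PSHOn (fun z => -Real.log (infDist z Ωᶜ)) Ω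

/-- A bounded domain: open, connected and bounded. -/
def IsBoundedDomain (Ω : Set E) : Prop :=
  IsOpen Ω ∧ IsConnected Ω ∧ IsBounded Ω

/-- The embedding `ℂ^k → ℂ^n` (`k ≤ n`) by zero in the last coordinates. -/
def emb {k n : ℕ} (z : EuclideanSpace ℂ (Fin k)) : EuclideanSpace ℂ (Fin n) :=
  WithLp.toLp 2 fun j => if hj : (j : ℕ) < k then z ⟨j, hj⟩ else 0

/-- The "tangential part" `(0, z₂, …, z_n)` of `z ∈ ℂⁿ`. -/
def tailPart {n : ℕ} (z : EuclideanSpace ℂ (Fin n)) : EuclideanSpace ℂ (Fin n) :=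
  WithLp.toLp 2 fun j => if (j : ℕ) = 0 then 0 else z j

end


section CaraAux

open Complex Metric Set

noncomputable def mo (b w : ℂ) : ℂ := (w - b) / (1 - (starRingEnd ℂ) b * w)

lemma mo_denom_ne {b w : ℂ} (hb : ‖b‖ < 1) (hw : ‖w‖ < 1) :
    1 - (starRingEnd ℂ) b * w ≠ 0 := by
  intro h
  have h1 : (1 : ℂ) = (starRingEnd ℂ) b * w := by linear_combination h
  have : (1:ℝ) = ‖(starRingEnd ℂ) b * w‖ := by rw [← h1]; simp
  rw [norm_mul] at this
  simp only [RCLike.norm_conj] at this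
  nlinarith [norm_nonneg b, norm_nonneg w]

lemma mo_mem {b w : ℂ} (hb : ‖b‖ < 1) (hw : ‖w‖ < 1) : ‖mo b w‖ < 1 := by
  have hd := mo_denom_ne hb hw
  rw [mo, norm_div]
  rw [div_lt_one (norm_pos_iff.2 hd)]
  have h1 : Complex.normSq (w - b) < Complex.normSq (1 - (starRingEnd ℂ) b * w) := by
    rw [Complex.normSq_sub, Complex.normSq_sub]
    have e1 : (w * (starRingEnd ℂ) b).re = ((1:ℂ) * (starRingEnd ℂ) ((starRingEnd ℂ) b * w)).re := by
      simp [Complex.mul_re, mul_comm]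
    rw [← e1]
    have e2 : Complex.normSq ((starRingEnd ℂ) b * w) = Complex.normSq b * Complex.normSq w := by
      simp [Complex.normSq_mul]
    rw [e2]
    have hb' : Complex.normSq b < 1 := by
      rw [Complex.normSq_eq_norm_sq]; nlinarith [norm_nonneg b]
    have hw' : Complex.normSq w < 1 := by
      rw [Complex.normSq_eq_norm_sq]; nlinarith [norm_nonneg w]
    simp only [Complex.normSq_one]
    nlinarith [Complex.normSq_nonneg b, Complex.normSq_nonneg w]
  rw [Complex.normSq_eq_norm_sq, Complex.normSq_eq_norm_sq] at h1
  nlinarith [norm_nonneg (w - b), norm_nonneg (1 - (starRingEnd ℂ) b * w)]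

lemma mo_hasDerivAt {b w : ℂ} (hb : ‖b‖ < 1) (hw : ‖w‖ < 1) :
    HasDerivAt (mo b) ((1 - (starRingEnd ℂ) b * b) / (1 - (starRingEnd ℂ) b * w) ^ 2) w := by
  have hd := mo_denom_ne hb hw
  have h1 : HasDerivAt (fun y : ℂ => y - b) 1 w := (hasDerivAt_id w).sub_const b
  have h2 : HasDerivAt (fun y : ℂ => 1 - (starRingEnd ℂ) b * y) (-((starRingEnd ℂ) b * 1)) w :=
    ((hasDerivAt_id w).const_mul _).const_sub 1
  have := h1.div h2 hd
  refine this.congr_deriv ?_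
  rw [div_eq_div_iff (pow_ne_zero 2 hd) (pow_ne_zero 2 hd)]
  ring

lemma mo_zero {b : ℂ} : mo b b = 0 := by simp [mo]

lemma schwarz_pick_zero {g : ℂ → ℂ} (hd : DifferentiableOn ℂ g (ball 0 1))
    (hm : MapsTo g (ball 0 1) (ball 0 1)) : ‖deriv g 0‖ ≤ 1 := by
  have h0 : (0:ℂ) ∈ ball (0:ℂ) 1 := mem_ball_self one_pos
  set b := g 0 with hbdef
  have hb : ‖b‖ < 1 := by simpa [dist_eq_norm] using hm h0
  set h : ℂ → ℂ := fun w => mo b (g w) with hhdef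
  have hdiff : DifferentiableOn ℂ h (ball 0 1) := by
    intro w hw
    have hgw : ‖g w‖ < 1 := by simpa [dist_eq_norm] using hm hw
    exact ((mo_hasDerivAt hb hgw).differentiableAt).comp_differentiableWithinAt w (hd w hw)
  have hmaps : MapsTo h (ball 0 1) (ball (h 0) 1) := by
    intro w hw
    have hgw : ‖g w‖ < 1 := by simpa [dist_eq_norm] using hm hw
    have : h 0 = 0 := by simp [hhdef, ← hbdef, mo_zero]
    rw [this]
    simpa [dist_eq_norm] using mo_mem hb hgw
  have hS := Complex.norm_deriv_le_div_of_mapsTo_ball hdiff (hmaps.mono_right ball_subset_closedBall) one_pos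
  have hg0 : HasDerivAt g (deriv g 0) 0 :=
    (hd.differentiableAt (isOpen_ball.mem_nhds h0)).hasDerivAt
  have hchain : HasDerivAt h
      ((1 - (starRingEnd ℂ) b * b) / (1 - (starRingEnd ℂ) b * b) ^ 2 * deriv g 0) 0 :=
    (mo_hasDerivAt hb hb).comp 0 hg0
  rw [hchain.deriv] at hS
  have hden : (1 : ℂ) - (starRingEnd ℂ) b * b = ((1 - ‖b‖^2 : ℝ) : ℂ) := by
    have : (starRingEnd ℂ) b * b = ((‖b‖^2 : ℝ) : ℂ) := by
      rw [mul_comm, Complex.mul_conj]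
      simp [Complex.normSq_eq_norm_sq]
    rw [this]; push_cast; ring
  have hb2 : (0:ℝ) < 1 - ‖b‖^2 := by nlinarith [norm_nonneg b]
  have hnum : ‖(1 - (starRingEnd ℂ) b * b) / (1 - (starRingEnd ℂ) b * b) ^ 2‖
      = (1 - ‖b‖^2)⁻¹ := by
    have hx : (((1 - ‖b‖^2 : ℝ)) : ℂ) ≠ 0 := by exact_mod_cast hb2.ne'
    rw [hden, show (((1 - ‖b‖^2 : ℝ)):ℂ)^2 = (((1 - ‖b‖^2 : ℝ)):ℂ) * (((1 - ‖b‖^2 : ℝ)):ℂ) from sq _,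
      div_mul_eq_div_div, div_self hx, one_div, norm_inv,
      Complex.norm_real, Real.norm_eq_abs, _root_.abs_of_pos hb2]
  rw [norm_mul, hnum] at hS
  have h2 := mul_le_mul_of_nonneg_left hS hb2.le
  rw [← mul_assoc, mul_inv_cancel₀ hb2.ne', one_mul] at h2
  calc ‖deriv g 0‖ ≤ (1 - ‖b‖^2) * (1/1) := h2
    _ ≤ 1 := by nlinarith [norm_nonneg b]

lemma norm_one_sub_conj_mul_self {b : ℂ} (hb : ‖b‖ < 1) :
    (1 : ℂ) - (starRingEnd ℂ) b * b = ((1 - ‖b‖^2 : ℝ) : ℂ) ∧ (0:ℝ) < 1 - ‖b‖^2 := by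
  constructor
  · have : (starRingEnd ℂ) b * b = ((‖b‖^2 : ℝ) : ℂ) := by
      rw [mul_comm, Complex.mul_conj]; simp [Complex.normSq_eq_norm_sq]
    rw [this]; push_cast; ring
  · nlinarith [norm_nonneg b]

lemma schwarz_pick_ball {f : ℂ → ℂ} {c : ℂ} {r : ℝ} (hr : 0 < r)
    (hd : DifferentiableOn ℂ f (ball c r)) (hm : MapsTo f (ball c r) (ball 0 1))
    {z : ℂ} (hz : z ∈ ball c r) : ‖deriv f z‖ ≤ r / (r^2 - ‖z - c‖^2) := by
  set a : ℂ := (z - c) / r with hadef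
  have hzc : ‖z - c‖ < r := by simpa [dist_eq_norm] using hz
  have hanorm : ‖a‖ = ‖z - c‖ / r := by
    rw [hadef, norm_div, Complex.norm_real, Real.norm_eq_abs, _root_.abs_of_pos hr]
  have ha : ‖a‖ < 1 := by rw [hanorm]; rw [div_lt_one hr]; exact hzc
  have ha' : ‖-a‖ < 1 := by rwa [norm_neg]
  set ψ : ℂ → ℂ := fun w => c + (r:ℂ) * mo (-a) w with hψdef
  have hψmaps : MapsTo ψ (ball 0 1) (ball c r) := by
    intro w hw
    have hw' : ‖w‖ < 1 := by simpa [dist_eq_norm] using hw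
    have := mo_mem ha' hw'
    simp only [hψdef, mem_ball, dist_eq_norm, add_sub_cancel_left, norm_mul,
      Complex.norm_real, Real.norm_eq_abs, _root_.abs_of_pos hr]
    calc r * ‖mo (-a) w‖ < r * 1 := by exact mul_lt_mul_of_pos_left this hr
      _ = r := mul_one r
  have hψdiff : DifferentiableOn ℂ ψ (ball 0 1) := by
    intro w hw
    have hw' : ‖w‖ < 1 := by simpa [dist_eq_norm] using hw
    exact (((mo_hasDerivAt ha' hw').differentiableAt.const_mul _).const_add c).differentiableWithinAt
  have hψ0 : ψ 0 = z := by
    have : mo (-a) 0 = a := by simp [mo]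
    rw [hψdef]; simp only [this]
    rw [hadef]
    have : (r:ℂ) ≠ 0 := by exact_mod_cast hr.ne'
    field_simp
    ring
  have hψd0 : HasDerivAt ψ ((r:ℂ) * ((1 - (starRingEnd ℂ) (-a) * (-a)) / (1 - (starRingEnd ℂ) (-a) * 0) ^ 2)) 0 := by
    exact ((mo_hasDerivAt ha' (by simp)).const_mul _).const_add c
  have h0mem : (0:ℂ) ∈ ball (0:ℂ) 1 := mem_ball_self one_pos
  have hfz : HasDerivAt f (deriv f z) z :=
    (hd.differentiableAt (isOpen_ball.mem_nhds hz)).hasDerivAt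
  set g : ℂ → ℂ := fun w => f (ψ w) with hgdef
  have hgd : DifferentiableOn ℂ g (ball 0 1) := by
    intro w hw
    exact ((hd.differentiableAt (isOpen_ball.mem_nhds (hψmaps hw)))).comp_differentiableWithinAt w (hψdiff w hw)
  have hgm : MapsTo g (ball 0 1) (ball 0 1) := fun w hw => hm (hψmaps hw)
  have hgchain : HasDerivAt g (deriv f z *
      ((r:ℂ) * ((1 - (starRingEnd ℂ) (-a) * (-a)) / (1 - (starRingEnd ℂ) (-a) * 0) ^ 2))) 0 := by
    have hfz' : HasDerivAt f (deriv f z) (ψ 0) := hψ0.symm ▸ hfz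
    exact hfz'.comp 0 hψd0
  have hS := schwarz_pick_zero hgd hgm
  rw [hgchain.deriv, norm_mul] at hS
  have hma : ((1:ℂ) - (starRingEnd ℂ) (-a) * (-a)) = ((1 - ‖a‖^2 : ℝ) : ℂ) := by
    have h1 : (starRingEnd ℂ) (-a) * (-a) = (starRingEnd ℂ) a * a := by simp
    rw [h1, (norm_one_sub_conj_mul_self ha).1]
  have key : ‖(r:ℂ) * ((1 - (starRingEnd ℂ) (-a) * (-a)) / (1 - (starRingEnd ℂ) (-a) * 0) ^ 2)‖
      = (r^2 - ‖z-c‖^2)/r := by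
    simp only [mul_zero, sub_zero, one_pow, div_one]
    rw [norm_mul, hma, Complex.norm_real, Complex.norm_real, Real.norm_eq_abs, Real.norm_eq_abs,
      _root_.abs_of_pos hr, _root_.abs_of_pos (norm_one_sub_conj_mul_self ha).2, hanorm]
    rw [div_pow]
    field_simp
  rw [key] at hS
  have hpos : (0:ℝ) < r^2 - ‖z-c‖^2 := by nlinarith [norm_nonneg (z - c)]
  rw [le_div_iff₀ hpos]
  have := mul_le_mul_of_nonneg_right hS hr.le
  calc ‖deriv f z‖ * (r^2 - ‖z-c‖^2) = ‖deriv f z‖ * ((r^2 - ‖z-c‖^2)/r) * r := by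
        field_simp
    _ ≤ 1 * r := this
    _ = r := one_mul r

lemma taylor11 {ρ : ℂ → ℝ} {U : Set ℂ} (hU : IsOpen U) (hC1 : ContDiffOn ℝ 1 ρ U)
    {K : ℝ} (hK : 0 ≤ K)
    (hlip : ∀ a ∈ U, ∀ b ∈ U, ‖fderiv ℝ ρ a - fderiv ℝ ρ b‖ ≤ K * ‖a - b‖)
    {q x : ℂ} (hsub : closedBall q (dist x q) ⊆ U) :
    |ρ x - ρ q - fderiv ℝ ρ q (x - q)| ≤ K * ‖x - q‖^2 := by
  set g := fderiv ℝ ρ q with hgdef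
  set s := closedBall q (dist x q) with hsdef
  have hdiffρ : ∀ y ∈ s, DifferentiableAt ℝ ρ y := fun y hy =>
    (hC1.differentiableOn one_ne_zero).differentiableAt (hU.mem_nhds (hsub hy))
  have hdiff : ∀ y ∈ s, DifferentiableAt ℝ (fun y => ρ y - g y) y := fun y hy =>
    (hdiffρ y hy).sub (g.differentiableAt)
  have hqs : q ∈ s := mem_closedBall_self dist_nonneg
  have hxs : x ∈ s := by simp [hsdef, mem_closedBall]
  have hbound : ∀ y ∈ s, ‖fderiv ℝ (fun y => ρ y - g y) y‖ ≤ K * dist x q := by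
    intro y hy
    have h1 : fderiv ℝ (fun y => ρ y - g y) y = fderiv ℝ ρ y - g := by
      rw [fderiv_fun_sub (hdiffρ y hy) g.differentiableAt, g.fderiv]
    rw [h1]
    calc ‖fderiv ℝ ρ y - g‖ ≤ K * ‖y - q‖ := hlip y (hsub hy) q (hsub hqs)
      _ ≤ K * dist x q := by
          have h2 : ‖y - q‖ ≤ dist x q := by rwa [← dist_eq_norm, ← mem_closedBall]
          exact mul_le_mul_of_nonneg_left h2 hK
  have hmain := Convex.norm_image_sub_le_of_norm_fderiv_le hdiff hbound
    (convex_closedBall q (dist x q)) hqs hxs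
  have heq : ρ x - g x - (ρ q - g q) = ρ x - ρ q - g (x - q) := by
    rw [map_sub]; ring
  rw [heq] at hmain
  rw [Real.norm_eq_abs] at hmain
  calc |ρ x - ρ q - g (x - q)| ≤ K * dist x q * ‖x - q‖ := hmain
    _ = K * ‖x - q‖^2 := by rw [dist_eq_norm]; ring

lemma grad_repr (ρ : ℂ → ℝ) (q : ℂ) (v : ℂ) :
    fderiv ℝ ρ q v =
      ((starRingEnd ℂ) ((fderiv ℝ ρ q 1 : ℝ) + (fderiv ℝ ρ q Complex.I : ℝ) * Complex.I) * v).re := by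
  set g := fderiv ℝ ρ q with hg
  have hv : v = v.re • (1:ℂ) + v.im • Complex.I := by
    simp [Complex.real_smul, Complex.re_add_im]
  calc g v = g (v.re • (1:ℂ) + v.im • Complex.I) := by rw [← hv]
    _ = v.re * g 1 + v.im * g Complex.I := by
        rw [map_add, _root_.map_smul, _root_.map_smul]; simp
    _ = _ := by
        simp [Complex.mul_re, Complex.add_re, Complex.add_im, Complex.mul_im,
          Complex.conj_re, Complex.conj_im, Complex.ofReal_re, Complex.ofReal_im]
        ring

lemma balls {D U : Set ℂ} {ρ : ℂ → ℝ} (hU : IsOpen U) (hC1 : ContDiffOn ℝ 1 ρ U)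
    {K : ℝ} (hK : 0 < K)
    (hlip : ∀ a ∈ U, ∀ b ∈ U, ‖fderiv ℝ ρ a - fderiv ℝ ρ b‖ ≤ K * ‖a - b‖)
    (hDU : D ∩ U = {z ∈ U | ρ z < 0})
    {q : ℂ} (hq0 : ρ q = 0) {r : ℝ} (hr : 0 < r) (hsub : closedBall q (3*r) ⊆ U)
    {G : ℂ} (hG : ∀ v, fderiv ℝ ρ q v = ((starRingEnd ℂ) G * v).re)
    {m : ℝ} (hm : m = ‖G‖) (hmr : 2*K*r < m) {ν : ℂ} (hν : ν = -G/(m:ℂ)) :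
    (ball (q + (r:ℂ)*ν) r ⊆ D) ∧ (∀ x ∈ ball (q - (r:ℂ)*ν) r, x ∉ D) := by
  have hm0 : 0 < m := lt_trans (by positivity) hmr
  have hmC : (m:ℂ) ≠ 0 := by exact_mod_cast hm0.ne'
  have hνG : G = -(m:ℂ)*ν := by rw [hν]; field_simp
  have hνabs : ‖ν‖ = 1 := by
    rw [hν, norm_div, norm_neg, Complex.norm_real, Real.norm_eq_abs, _root_.abs_of_pos hm0, ← hm]
    exact div_self hm0.ne'
  have hνnorm : ‖ν‖ = 1 := by rw [hνabs]
  have hνν : (starRingEnd ℂ) ν * ν = 1 := by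
    rw [mul_comm, Complex.mul_conj]
    rw [Complex.normSq_eq_norm_sq, hνabs]; norm_num
  have hconjG : (starRingEnd ℂ) G = -(m:ℂ) * (starRingEnd ℂ) ν := by
    rw [hνG, map_mul, map_neg, Complex.conj_ofReal]
  have hrν : ‖(r:ℂ)*ν‖ = r := by
    rw [norm_mul, Complex.norm_real, Real.norm_eq_abs, _root_.abs_of_pos hr, hνnorm, mul_one]
  constructor
  · intro x hx
    set w : ℂ := x - (q + (r:ℂ)*ν) with hwdef
    have hw : ‖w‖ < r := by simpa [hwdef, dist_eq_norm] using hx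
    have hxq : x - q = w + (r:ℂ)*ν := by rw [hwdef]; ring
    have hxqn : ‖x - q‖ < 2*r := by
      rw [hxq]
      calc ‖w + (r:ℂ)*ν‖ ≤ ‖w‖ + ‖(r:ℂ)*ν‖ := norm_add_le _ _
        _ < 2*r := by rw [hrν]; linarith
    have hxU : x ∈ U := hsub (by
      rw [mem_closedBall, dist_eq_norm]; linarith)
    have hsubd : closedBall q (dist x q) ⊆ U :=
      subset_trans (closedBall_subset_closedBall (by rw [dist_eq_norm]; linarith)) hsub
    set s : ℝ := ((starRingEnd ℂ) ν * w).re with hsdef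
    have hsabs : |s| ≤ ‖w‖ := by
      calc |s| ≤ ‖(starRingEnd ℂ) ν * w‖ := Complex.abs_re_le_norm _
        _ = ‖w‖ := by rw [norm_mul, RCLike.norm_conj, hνabs, one_mul]
    have hgu : fderiv ℝ ρ q (x - q) = -m*s - m*r := by
      rw [hG, hxq, hconjG]
      have h1 : -(m:ℂ) * (starRingEnd ℂ) ν * (w + (r:ℂ)*ν)
          = -(m:ℂ) * ((starRingEnd ℂ) ν * w) + (-(m:ℂ)*(r:ℂ))*((starRingEnd ℂ) ν * ν) := by ring
      rw [h1, hνν, mul_one]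
      have h2 : -(m:ℂ) * ((starRingEnd ℂ) ν * w) = ((-m : ℝ):ℂ) * ((starRingEnd ℂ) ν * w) := by
        push_cast; ring
      have h3 : (-(m:ℂ)*(r:ℂ)) = ((-(m*r) : ℝ) : ℂ) := by push_cast; ring
      rw [h2, h3, Complex.add_re, Complex.re_ofReal_mul, Complex.ofReal_re, ← hsdef]
      try ring
    have hu2 : ‖x - q‖^2 = ‖w‖^2 + 2*r*s + r^2 := by
      rw [hxq]
      rw [Complex.sq_norm, Complex.sq_norm]
      rw [Complex.normSq_add]
      have h1 : Complex.normSq ((r:ℂ)*ν) = r^2 := by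
        rw [Complex.normSq_mul, Complex.normSq_ofReal]
        rw [Complex.normSq_eq_norm_sq, hνabs]; ring
      have h2 : (w * (starRingEnd ℂ) ((r:ℂ)*ν)).re = r * s := by
        rw [map_mul, Complex.conj_ofReal]
        have : w * ((r:ℂ) * (starRingEnd ℂ) ν) = (r:ℂ) * ((starRingEnd ℂ) ν * w) := by ring
        rw [this, Complex.re_ofReal_mul, ← hsdef]
      rw [h1, h2]; ring
    have htay := taylor11 hU hC1 hK.le hlip hsubd
    rw [hq0, sub_zero, hgu] at htay
    have hρx : ρ x ≤ -m*s - m*r + K*(‖w‖^2 + 2*r*s + r^2) := by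
      have := (abs_le.1 htay).2
      rw [hu2] at this
      linarith
    have h1 : 0 < (m - 2*K*r)*(s + r) := by
      apply mul_pos (by linarith)
      have := neg_abs_le s
      linarith
    have hsq : ‖w‖^2 < r^2 := by nlinarith [norm_nonneg w]
    have h2 : K*‖w‖^2 < K*r^2 := by nlinarith [hsq, hK]
    have hρneg : ρ x < 0 := by nlinarith
    have : x ∈ D ∩ U := by rw [hDU]; exact ⟨hxU, hρneg⟩
    exact this.1
  · intro x hx hxD
    set w : ℂ := x - (q - (r:ℂ)*ν) with hwdef
    have hw : ‖w‖ < r := by simpa [hwdef, dist_eq_norm] using hx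
    have hxq : x - q = w - (r:ℂ)*ν := by rw [hwdef]; ring
    have hxqn : ‖x - q‖ < 2*r := by
      rw [hxq]
      calc ‖w - (r:ℂ)*ν‖ ≤ ‖w‖ + ‖(r:ℂ)*ν‖ := norm_sub_le _ _
        _ < 2*r := by rw [hrν]; linarith
    have hxU : x ∈ U := hsub (by rw [mem_closedBall, dist_eq_norm]; linarith)
    have hsubd : closedBall q (dist x q) ⊆ U :=
      subset_trans (closedBall_subset_closedBall (by rw [dist_eq_norm]; linarith)) hsub
    have hρx : ρ x < 0 := by
      have : x ∈ D ∩ U := ⟨hxD, hxU⟩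
      rw [hDU] at this
      exact this.2
    set s : ℝ := ((starRingEnd ℂ) ν * w).re with hsdef
    have hsabs : |s| ≤ ‖w‖ := by
      calc |s| ≤ ‖(starRingEnd ℂ) ν * w‖ := Complex.abs_re_le_norm _
        _ = ‖w‖ := by rw [norm_mul, RCLike.norm_conj, hνabs, one_mul]
    have hgu : fderiv ℝ ρ q (x - q) = -m*s + m*r := by
      rw [hG, hxq, hconjG]
      have h1 : -(m:ℂ) * (starRingEnd ℂ) ν * (w - (r:ℂ)*ν)
          = -(m:ℂ) * ((starRingEnd ℂ) ν * w) + ((m:ℂ)*(r:ℂ))*((starRingEnd ℂ) ν * ν) := by ring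
      rw [h1, hνν, mul_one]
      have h2 : -(m:ℂ) * ((starRingEnd ℂ) ν * w) = ((-m : ℝ):ℂ) * ((starRingEnd ℂ) ν * w) := by
        push_cast; ring
      have h3 : ((m:ℂ)*(r:ℂ)) = (((m*r) : ℝ) : ℂ) := by push_cast; ring
      rw [h2, h3, Complex.add_re, Complex.re_ofReal_mul, Complex.ofReal_re, ← hsdef]
      try ring
    have hu2 : ‖x - q‖^2 = ‖w‖^2 - 2*r*s + r^2 := by
      rw [hxq]
      rw [Complex.sq_norm, Complex.sq_norm]
      rw [Complex.normSq_sub]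
      have h1 : Complex.normSq ((r:ℂ)*ν) = r^2 := by
        rw [Complex.normSq_mul, Complex.normSq_ofReal]
        rw [Complex.normSq_eq_norm_sq, hνabs]; ring
      have h2 : (w * (starRingEnd ℂ) ((r:ℂ)*ν)).re = r * s := by
        rw [map_mul, Complex.conj_ofReal]
        have : w * ((r:ℂ) * (starRingEnd ℂ) ν) = (r:ℂ) * ((starRingEnd ℂ) ν * w) := by ring
        rw [this, Complex.re_ofReal_mul, ← hsdef]
      rw [h1, h2]; ring
    have htay := taylor11 hU hC1 hK.le hlip hsubd
    rw [hq0, sub_zero, hgu] at htay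
    have hlow : -m*s + m*r - K*(‖w‖^2 - 2*r*s + r^2) ≤ ρ x := by
      have := (abs_le.1 htay).1
      rw [hu2] at this
      linarith
    have h1 : 0 < (m - 2*K*r)*(r - s) := by
      apply mul_pos (by linarith)
      have := le_abs_self s
      linarith
    have hsq : ‖w‖^2 < r^2 := by nlinarith [norm_nonneg w]
    have h2 : K*‖w‖^2 < K*r^2 := by nlinarith [hsq, hK]
    nlinarith

lemma lower_mem {D : Set ℂ} {z c : ℂ} {r : ℝ} (hr : 0 < r) (hzD : z ∈ D)
    (hfar : ∀ w ∈ D, r < ‖w - c‖) :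
    ∃ f : ℂ → ℂ, DifferentiableOn ℂ f D ∧ MapsTo f D (ball 0 1) ∧
      ‖fderiv ℂ f z 1‖ = r / (‖z - c‖^2 - r^2) := by
  set R := ‖z - c‖ with hR
  have hrR : r < R := hfar z hzD
  have hRpos : 0 < R := lt_trans hr hrR
  set f : ℂ → ℂ := fun w => (r:ℂ) * (w - c)⁻¹ with hfdef
  have hne : ∀ w ∈ D, w - c ≠ 0 := by
    intro w hw he
    have := hfar w hw
    rw [he, norm_zero] at this
    linarith
  have hfnorm : ∀ w ∈ D, ‖f w‖ = r / ‖w - c‖ := by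
    intro w hw
    rw [hfdef]
    simp only [norm_mul, norm_inv, Complex.norm_real, Real.norm_eq_abs, _root_.abs_of_pos hr]
    rw [div_eq_mul_inv]
  have hflt : ∀ w ∈ D, ‖f w‖ < 1 := by
    intro w hw
    rw [hfnorm w hw, div_lt_one (lt_trans hr (hfar w hw))]
    exact hfar w hw
  have hfD : ∀ w ∈ D, HasDerivAt f ((r:ℂ) * (-1/(w - c)^2)) w := by
    intro w hw
    have h1 : HasDerivAt (fun y : ℂ => y - c) 1 w := (hasDerivAt_id w).sub_const c
    have h2 := h1.inv (hne w hw)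
    have h3 := h2.const_mul (r:ℂ)
    exact h3.congr_deriv (by ring)
  set b := f z with hbdef
  have hb : ‖b‖ < 1 := hflt z hzD
  have hbnorm : ‖b‖ = r / R := hfnorm z hzD
  refine ⟨fun w => mo b (f w), ?_, ?_, ?_⟩
  · intro w hw
    exact ((mo_hasDerivAt hb (hflt w hw)).differentiableAt).comp_differentiableWithinAt w
      ((hfD w hw).differentiableAt.differentiableWithinAt)
  · intro w hw
    simpa [dist_eq_norm] using mo_mem hb (hflt w hw)
  · have hchain : HasDerivAt (fun w => mo b (f w))
        ((1 - (starRingEnd ℂ) b * b) / (1 - (starRingEnd ℂ) b * b)^2 * ((r:ℂ) * (-1/(z - c)^2))) z :=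
      by have h := mo_hasDerivAt hb hb; rw [hbdef] at h ⊢; exact h.comp z (hfD z hzD)
    have hfd1 : fderiv ℂ (fun w => mo b (f w)) z 1 = deriv (fun w => mo b (f w)) z := rfl
    rw [hfd1, hchain.deriv, norm_mul]
    obtain ⟨hden, hb2⟩ := norm_one_sub_conj_mul_self hb
    have hx : (((1 - ‖b‖^2 : ℝ)) : ℂ) ≠ 0 := by exact_mod_cast hb2.ne'
    have hfac1 : ‖(1 - (starRingEnd ℂ) b * b) / (1 - (starRingEnd ℂ) b * b)^2‖ = (1 - ‖b‖^2)⁻¹ := by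
      rw [hden, show (((1 - ‖b‖^2 : ℝ)):ℂ)^2 = (((1 - ‖b‖^2 : ℝ)):ℂ) * (((1 - ‖b‖^2 : ℝ)):ℂ) from sq _,
        div_mul_eq_div_div, div_self hx, one_div, norm_inv,
        Complex.norm_real, Real.norm_eq_abs, _root_.abs_of_pos hb2]
    have hfac2 : ‖(r:ℂ) * (-1/(z - c)^2)‖ = r / R^2 := by
      rw [norm_mul, norm_div, norm_neg, norm_one, norm_pow, Complex.norm_real,
        Real.norm_eq_abs, _root_.abs_of_pos hr, ← hR, mul_one_div]
    rw [hfac1, hfac2, hbnorm]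
    have hR0 : R ≠ 0 := hRpos.ne'
    have hR2 : R^2 - r^2 ≠ 0 := by nlinarith
    field_simp

end CaraAux

set_option maxHeartbeats 1000000 in
/-- **Proposition (planar), Carathéodory case.** If `p` is a `C^{1,1}`-smooth boundary
point of a planar domain `D`, then `limsup_{D∋z→p} |γ_D(z;1) − 1/(2δ_D(z))| < ∞`. -/
theorem statement15 (D : Set ℂ) (p : ℂ) (U : Set ℂ) (ρ : ℂ → ℝ)
    (hdom : IsOpen D ∧ IsConnected D) (hp : p ∈ frontier D)
    (hρ : IsDefining11 D p U ρ) :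
    ∃ C : ℝ, ∀ᶠ z in 𝓝[D] p, |cara D z 1 - 1 / (2 * infDist z Dᶜ)| ≤ C := by
  obtain ⟨hDopen, -⟩ := hdom
  obtain ⟨hUopen, hpU, hC1, ⟨K₀, hK₀⟩, hgradne, hDU⟩ := hρ
  set K : ℝ := (K₀:ℝ) + 1 with hKdef
  have hKpos : 0 < K := by positivity
  have hlip : ∀ a ∈ U, ∀ b ∈ U, ‖fderiv ℝ ρ a - fderiv ℝ ρ b‖ ≤ K * ‖a - b‖ := by
    intro a ha b hb
    have h1 := hK₀.dist_le_mul a ha b hb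
    rw [dist_eq_norm, dist_eq_norm] at h1
    have h2 : (K₀:ℝ) * ‖a - b‖ ≤ K * ‖a - b‖ := by
      apply mul_le_mul_of_nonneg_right _ (norm_nonneg _)
      rw [hKdef]; linarith
    exact le_trans h1 h2
  set Gp : ℂ := ((fderiv ℝ ρ p 1 : ℝ) : ℂ) + ((fderiv ℝ ρ p Complex.I : ℝ) : ℂ) * Complex.I
    with hGpdef
  have hGp : ∀ v, fderiv ℝ ρ p v = ((starRingEnd ℂ) Gp * v).re := grad_repr ρ p
  have hGp0 : Gp ≠ 0 := by
    intro h
    apply hgradne p hpU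
    ext v
    rw [ContinuousLinearMap.zero_apply, hGp v, h]
    simp
  set m₀ : ℝ := ‖Gp‖ with hm₀def
  have hm₀pos : 0 < m₀ := norm_pos_iff.mpr hGp0
  obtain ⟨ε₀, hε₀pos, hballU⟩ := Metric.isOpen_iff.mp hUopen p hpU
  set r₀ : ℝ := ε₀/9 with hr₀def
  have hr₀pos : 0 < r₀ := by positivity
  have hcbU : closedBall p (8*r₀) ⊆ U := by
    intro y hy
    apply hballU
    rw [mem_ball]
    rw [mem_closedBall] at hy
    calc dist y p ≤ 8*(ε₀/9) := hy
      _ < ε₀ := by linarith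
  set r : ℝ := min r₀ (m₀/(8*K)) with hrdef
  have hrpos : 0 < r := lt_min hr₀pos (by positivity)
  have hrr₀ : r ≤ r₀ := min_le_left _ _
  have hrm : r ≤ m₀/(8*K) := min_le_right _ _
  refine ⟨1/r, ?_⟩
  have hball2 : ball p (r/2) ∈ 𝓝 p := ball_mem_nhds _ (by positivity)
  filter_upwards [self_mem_nhdsWithin, mem_nhdsWithin_of_mem_nhds hball2] with z hzD hzB
  set δ := infDist z Dᶜ with hδdef
  have hDc_closed : IsClosed Dᶜ := hDopen.isClosed_compl
  have hpD : p ∉ D := by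
    have h := hp
    rw [hDopen.frontier_eq] at h
    exact h.2
  have hpDc : p ∈ Dᶜ := hpD
  have hδpos : 0 < δ := by
    rw [hδdef]
    exact (hDc_closed.notMem_iff_infDist_pos ⟨p, hpDc⟩).mp (fun h => h hzD)
  have hzp : ‖z - p‖ < r/2 := by rw [← dist_eq_norm]; exact hzB
  have hδle : δ ≤ ‖z - p‖ := by rw [← dist_eq_norm]; exact infDist_le_dist_of_mem hpDc
  have hδr2 : δ < r/2 := lt_of_le_of_lt hδle hzp
  obtain ⟨q, hqDc, hdq⟩ := hDc_closed.exists_infDist_eq_dist ⟨p, hpDc⟩ z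
  have hzq : dist z q = δ := hdq.symm
  have hqD : q ∉ D := hqDc
  have hzqne : z ≠ q := by
    intro h
    rw [h, dist_self] at hzq
    linarith
  have hqcl : q ∈ closure D := by
    rw [Metric.mem_closure_iff]
    intro ε hε
    set t : ℝ := 1 - min (ε/(2*δ)) 1 with htdef
    have hmin0 : 0 < min (ε/(2*δ)) 1 := lt_min (by positivity) one_pos
    have hmin1 : min (ε/(2*δ)) 1 ≤ 1 := min_le_right _ _
    have ht0 : 0 ≤ t := by rw [htdef]; linarith
    have ht1 : t < 1 := by rw [htdef]; linarith
    refine ⟨z + (t:ℂ) * (q - z), ?_, ?_⟩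
    · by_contra hyD
      have h1 : δ ≤ dist z (z + (t:ℂ) * (q - z)) := infDist_le_dist_of_mem hyD
      have h2 : dist z (z + (t:ℂ) * (q - z)) = t * δ := by
        rw [dist_eq_norm]
        have : z - (z + (t:ℂ) * (q - z)) = (t:ℂ) * (z - q) := by ring
        rw [this, norm_mul, Complex.norm_real, Real.norm_eq_abs, _root_.abs_of_nonneg ht0,
          ← dist_eq_norm, hzq]
      rw [h2] at h1
      nlinarith
    · have h2 : dist q (z + (t:ℂ) * (q - z)) = (1-t) * δ := by
        rw [dist_eq_norm]
        have : q - (z + (t:ℂ) * (q - z)) = ((1-t : ℝ):ℂ) * (q - z) := by push_cast; ring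
        rw [this, norm_mul, Complex.norm_real, Real.norm_eq_abs, _root_.abs_of_nonneg (by linarith),
          ← dist_eq_norm, dist_comm, hzq]
      rw [h2, htdef]
      have h3 : (1 - (1 - min (ε/(2*δ)) 1)) * δ ≤ (ε/(2*δ)) * δ := by
        apply mul_le_mul_of_nonneg_right _ hδpos.le
        simp [min_le_left]
      calc (1 - (1 - min (ε/(2*δ)) 1)) * δ ≤ (ε/(2*δ)) * δ := h3
        _ = ε/2 := by field_simp
        _ < ε := by linarith
  have hqznorm : ‖q - z‖ = δ := by rw [← dist_eq_norm, dist_comm, hzq]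
  have hqp : ‖q - p‖ < r := by
    calc ‖q - p‖ ≤ ‖q - z‖ + ‖z - p‖ := by
          have : q - p = (q - z) + (z - p) := by ring
          rw [this]; exact norm_add_le _ _
      _ < δ + r/2 := by rw [hqznorm]; linarith
      _ < r := by linarith
  have hqU : q ∈ U := hcbU (by
    rw [mem_closedBall, dist_eq_norm]
    calc ‖q - p‖ ≤ r := hqp.le
      _ ≤ 8*r₀ := by linarith)
  have hρq : ρ q = 0 := by
    rcases lt_trichotomy (ρ q) 0 with hlt | heq | hgt
    · exfalso
      apply hqD
      have : q ∈ D ∩ U := by rw [hDU]; exact ⟨hqU, hlt⟩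
      exact this.1
    · exact heq
    · exfalso
      have hcont : ContinuousAt ρ q := hC1.continuousOn.continuousAt (hUopen.mem_nhds hqU)
      have h1 : ρ ⁻¹' Set.Ioi 0 ∈ 𝓝 q := hcont (Ioi_mem_nhds hgt)
      have h2 : (ρ ⁻¹' Set.Ioi 0) ∩ U ∈ 𝓝 q := inter_mem h1 (hUopen.mem_nhds hqU)
      obtain ⟨x, ⟨hx1, hx2⟩, hx3⟩ := mem_closure_iff_nhds.mp hqcl _ h2
      have hxDU : x ∈ D ∩ U := ⟨hx3, hx2⟩
      rw [hDU] at hxDU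
      have : (0:ℝ) < ρ x := hx1
      linarith [hxDU.2]
  set Gq : ℂ := ((fderiv ℝ ρ q 1 : ℝ):ℂ) + ((fderiv ℝ ρ q Complex.I : ℝ):ℂ) * Complex.I
    with hGqdef
  have hGq : ∀ v, fderiv ℝ ρ q v = ((starRingEnd ℂ) Gq * v).re := grad_repr ρ q
  set m : ℝ := ‖Gq‖ with hmdef
  have hGqGp : ‖Gq - Gp‖ ≤ 2*(K*‖q - p‖) := by
    set d := fderiv ℝ ρ q - fderiv ℝ ρ p with hddef
    have hd : ‖d‖ ≤ K*‖q-p‖ := hlip q hqU p hpU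
    have hval : Gq - Gp = ((d 1 : ℝ):ℂ) + ((d Complex.I : ℝ):ℂ) * Complex.I := by
      rw [hGqdef, hGpdef, hddef]
      simp only [ContinuousLinearMap.sub_apply]
      push_cast
      ring
    rw [hval]
    have e1 : ‖((d 1 : ℝ):ℂ)‖ ≤ K*‖q-p‖ := by
      rw [Complex.norm_real, Real.norm_eq_abs]
      calc |d 1| = ‖d 1‖ := (Real.norm_eq_abs _).symm
        _ ≤ ‖d‖ * ‖(1:ℂ)‖ := d.le_opNorm 1
        _ = ‖d‖ := by simp
        _ ≤ K*‖q-p‖ := hd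
    have e2 : ‖((d Complex.I : ℝ):ℂ) * Complex.I‖ ≤ K*‖q-p‖ := by
      rw [norm_mul, Complex.norm_I, mul_one, Complex.norm_real, Real.norm_eq_abs]
      calc |d Complex.I| = ‖d Complex.I‖ := (Real.norm_eq_abs _).symm
        _ ≤ ‖d‖ * ‖Complex.I‖ := d.le_opNorm Complex.I
        _ = ‖d‖ := by simp
        _ ≤ K*‖q-p‖ := hd
    calc ‖((d 1 : ℝ):ℂ) + ((d Complex.I : ℝ):ℂ) * Complex.I‖
        ≤ ‖((d 1 : ℝ):ℂ)‖ + ‖((d Complex.I : ℝ):ℂ) * Complex.I‖ := norm_add_le _ _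
      _ ≤ 2*(K*‖q-p‖) := by linarith
  have hKr : K * r ≤ m₀/8 := by
    have := mul_le_mul_of_nonneg_left hrm hKpos.le
    calc K * r ≤ K * (m₀/(8*K)) := this
      _ = m₀/8 := by field_simp
  have hm_lb : 3/4*m₀ ≤ m := by
    have h1 : m₀ - m ≤ ‖Gp - Gq‖ := by
      rw [hmdef, hm₀def]
      exact norm_sub_norm_le _ _
    rw [norm_sub_rev] at h1
    have h2 : ‖Gq - Gp‖ ≤ m₀/4 := by
      have h3 : K*‖q-p‖ ≤ K*r := mul_le_mul_of_nonneg_left hqp.le hKpos.le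
      calc ‖Gq - Gp‖ ≤ 2*(K*‖q-p‖) := hGqGp
        _ ≤ 2*(K*r) := by linarith
        _ ≤ m₀/4 := by linarith
    linarith
  have hmr : 2*K*r < m := by
    have h9 : 2*K*r ≤ m₀/4 := by linarith
    have h10 : m₀/4 < 3/4*m₀ := by linarith
    exact lt_of_le_of_lt h9 (lt_of_lt_of_le h10 hm_lb)
  set ν : ℂ := -Gq/(m:ℂ) with hνdef
  have hsub3 : closedBall q (3*r) ⊆ U := by
    intro y hy
    apply hcbU
    rw [mem_closedBall]
    calc dist y p ≤ dist y q + dist q p := dist_triangle _ _ _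
      _ ≤ 3*r + r := by
          rw [mem_closedBall] at hy
          have : dist q p < r := by rw [dist_eq_norm]; exact hqp
          linarith
      _ ≤ 8*r₀ := by linarith
  obtain ⟨hIn, hOut⟩ := balls hUopen hC1 hKpos hlip hDU hρq hrpos hsub3 hGq hmdef hmr hνdef
  have hmpos : 0 < m := by linarith
  have hνnorm : ‖ν‖ = 1 := by
    rw [hνdef, norm_div, norm_neg, Complex.norm_real, Real.norm_eq_abs, _root_.abs_of_pos hmpos,
      ← hmdef]
    exact div_self hmpos.ne'
  have hrν : ‖(r:ℂ)*ν‖ = r := by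
    rw [norm_mul, Complex.norm_real, Real.norm_eq_abs, _root_.abs_of_pos hrpos, hνnorm, mul_one]
  set c_i : ℂ := q + (r:ℂ)*ν with hcidef
  set c_e : ℂ := q - (r:ℂ)*ν with hcedef
  set R : ℝ := ‖z - c_e‖ with hRdef
  have hznotball : z ∉ ball c_e r := fun h => hOut z h hzD
  have hRr : r ≤ R := by
    by_contra h
    push_neg at h
    exact hznotball (by rw [mem_ball, dist_eq_norm]; exact h)
  have hRpos : 0 < R := lt_of_lt_of_le hrpos hRr
  have hR_ge : r + δ ≤ R := by
    by_contra hcon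
    push_neg at hcon
    set r' : ℝ := (R - δ + r)/2 with hr'def
    have h1 : R - δ < r' := by rw [hr'def]; linarith
    have h2 : r' < r := by rw [hr'def]; linarith
    have h3 : 0 < r' := by rw [hr'def]; linarith
    set y : ℂ := c_e + ((r'/R : ℝ):ℂ) * (z - c_e) with hydef
    have hy_ball : y ∈ ball c_e r := by
      rw [mem_ball, dist_eq_norm, hydef]
      have : c_e + ((r'/R : ℝ):ℂ) * (z - c_e) - c_e = ((r'/R : ℝ):ℂ) * (z - c_e) := by ring
      rw [this, norm_mul, Complex.norm_real, Real.norm_eq_abs,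
        _root_.abs_of_pos (by positivity), ← hRdef]
      calc r'/R * R = r' := by field_simp
        _ < r := h2
    have hyDc : y ∈ Dᶜ := fun hyD => hOut y hy_ball hyD
    have h4 : δ ≤ dist z y := infDist_le_dist_of_mem hyDc
    have h5 : dist z y = R - r' := by
      rw [dist_eq_norm, hydef]
      have : z - (c_e + ((r'/R : ℝ):ℂ) * (z - c_e)) = ((1 - r'/R : ℝ):ℂ) * (z - c_e) := by
        push_cast; ring
      rw [this, norm_mul, Complex.norm_real, Real.norm_eq_abs, ← hRdef]
      have h6 : r'/R ≤ 1 := by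
        rw [div_le_one hRpos]; linarith
      rw [_root_.abs_of_nonneg (by linarith)]
      field_simp
    rw [h5] at h4
    linarith
  have hR_le : R ≤ r + δ := by
    have he : z - c_e = (z - q) + (r:ℂ)*ν := by rw [hcedef]; ring
    rw [hRdef, he]
    calc ‖(z - q) + (r:ℂ)*ν‖ ≤ ‖z - q‖ + ‖(r:ℂ)*ν‖ := norm_add_le _ _
      _ = δ + r := by rw [hrν, ← dist_eq_norm, hzq]
      _ = r + δ := by ring
  have hReq : R = r + δ := le_antisymm hR_le hR_ge
  have hsr : SameRay ℝ (z - q) ((r:ℂ)*ν) := by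
    rw [sameRay_iff_norm_add]
    have he : z - c_e = (z - q) + (r:ℂ)*ν := by rw [hcedef]; ring
    rw [← he, ← hRdef, hReq, hrν, ← dist_eq_norm, hzq]
    ring
  have hrν0 : (r:ℂ)*ν ≠ 0 := by
    intro h
    rw [h, norm_zero] at hrν
    linarith
  obtain ⟨a, b, ha, hb, hab⟩ := hsr.exists_pos (sub_ne_zero.2 hzqne) hrν0
  have hzqν : z - q = ((δ : ℝ):ℂ) * ν := by
    have habC : (a:ℂ) * (z - q) = (b:ℂ) * ((r:ℂ)*ν) := by
      have h1 := hab
      rw [Complex.real_smul, Complex.real_smul] at h1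
      exact h1
    have hnab : a * δ = b * r := by
      have h2 := congrArg norm habC
      rw [norm_mul, norm_mul, hrν, Complex.norm_real, Complex.norm_real,
        Real.norm_eq_abs, Real.norm_eq_abs, _root_.abs_of_pos ha, _root_.abs_of_pos hb,
        ← dist_eq_norm, hzq] at h2
      exact h2
    have haC : (a:ℂ) ≠ 0 := by exact_mod_cast ha.ne'
    apply mul_left_cancel₀ haC
    rw [habC]
    have hcast : (a:ℂ)*((δ:ℝ):ℂ) = (b:ℂ)*(r:ℂ) := by exact_mod_cast hnab
    calc (b:ℂ)*((r:ℂ)*ν) = ((b:ℂ)*(r:ℂ))*ν := by ring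
      _ = ((a:ℂ)*((δ:ℝ):ℂ))*ν := by rw [hcast]
      _ = (a:ℂ)*(((δ:ℝ):ℂ)*ν) := by ring
  have hzc_i : z - c_i = ((δ - r : ℝ):ℂ)*ν := by
    rw [hcidef]
    have : z - (q + (r:ℂ)*ν) = (z - q) - (r:ℂ)*ν := by ring
    rw [this, hzqν]
    push_cast
    ring
  have hzc_i_norm : ‖z - c_i‖ = r - δ := by
    rw [hzc_i, norm_mul, Complex.norm_real, Real.norm_eq_abs, hνnorm, mul_one,
      _root_.abs_of_neg (by linarith)]
    ring
  have hz_in : z ∈ ball c_i r := by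
    rw [mem_ball, dist_eq_norm, hzc_i_norm]
    linarith
  have hδ2r : 0 < δ*(2*r - δ) := mul_pos hδpos (by linarith)
  have hSbound : ∀ t ∈ {t : ℝ | ∃ f : ℂ → ℂ, DifferentiableOn ℂ f D ∧
      MapsTo f D (ball (0:ℂ) 1) ∧ t = ‖fderiv ℂ f z 1‖}, t ≤ r/(δ*(2*r-δ)) := by
    rintro t ⟨f, hfd, hfm, rfl⟩
    have hfd1 : fderiv ℂ f z 1 = deriv f z := rfl
    rw [hfd1]
    have hbnd := schwarz_pick_ball hrpos (hfd.mono hIn) (fun x hx => hfm (hIn hx)) hz_in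
    rw [hzc_i_norm] at hbnd
    calc ‖deriv f z‖ ≤ r/(r^2 - (r-δ)^2) := hbnd
      _ = r/(δ*(2*r-δ)) := by rw [show r^2 - (r-δ)^2 = δ*(2*r-δ) from by ring]
  have hcara_le : cara D z 1 ≤ r/(δ*(2*r-δ)) := by
    unfold cara
    exact Real.sSup_le hSbound (by positivity)
  have hfar : ∀ w ∈ D, r < ‖w - c_e‖ := by
    intro w hw
    have hge : r ≤ ‖w - c_e‖ := by
      by_contra h
      push_neg at h
      exact hOut w (by rw [mem_ball, dist_eq_norm]; exact h) hw
    rcases lt_or_eq_of_le hge with h | h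
    · exact h
    · exfalso
      obtain ⟨ε, hεpos, hballD⟩ := Metric.isOpen_iff.mp hDopen w hw
      set t : ℝ := min (ε/(2*r)) (1/2) with htdef
      have ht0 : 0 < t := lt_min (by positivity) (by norm_num)
      have ht1 : t ≤ 1/2 := min_le_right _ _
      set x : ℂ := w + (t:ℝ) * (c_e - w) with hxdef
      have hxD : x ∈ D := by
        apply hballD
        rw [mem_ball, dist_eq_norm, hxdef]
        have : w + (t:ℝ) * (c_e - w) - w = (t:ℝ) * (c_e - w) := by ring
        rw [this, norm_mul, Complex.norm_real, Real.norm_eq_abs, _root_.abs_of_pos ht0]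
        have hwc : ‖c_e - w‖ = r := by rw [norm_sub_rev, ← h]
        rw [hwc]
        calc t * r ≤ (ε/(2*r)) * r := by
              apply mul_le_mul_of_nonneg_right (min_le_left _ _) hrpos.le
          _ = ε/2 := by field_simp
          _ < ε := by linarith
      have hxball : x ∈ ball c_e r := by
        rw [mem_ball, dist_eq_norm, hxdef]
        have : w + (t:ℝ) * (c_e - w) - c_e = ((1 - t : ℝ):ℂ) * (w - c_e) := by push_cast; ring
        rw [this, norm_mul, Complex.norm_real, Real.norm_eq_abs,
          _root_.abs_of_pos (by linarith), ← h]
        nlinarith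
      exact hOut x hxball hxD
  obtain ⟨f, hfd, hfm, hfval⟩ := lower_mem hrpos hzD hfar
  have hmemS : r/(R^2 - r^2) ∈ {t : ℝ | ∃ f : ℂ → ℂ, DifferentiableOn ℂ f D ∧
      MapsTo f D (ball (0:ℂ) 1) ∧ t = ‖fderiv ℂ f z 1‖} := by
    refine ⟨f, hfd, hfm, ?_⟩
    rw [hfval, ← hRdef]
  have hbddS : BddAbove {t : ℝ | ∃ f : ℂ → ℂ, DifferentiableOn ℂ f D ∧
      MapsTo f D (ball (0:ℂ) 1) ∧ t = ‖fderiv ℂ f z 1‖} :=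
    ⟨r/(δ*(2*r-δ)), fun t ht => hSbound t ht⟩
  have hcara_ge : r/(R^2 - r^2) ≤ cara D z 1 := by
    unfold cara
    exact le_csSup hbddS hmemS
  rw [hReq, show (r+δ)^2 - r^2 = δ*(2*r+δ) from by ring] at hcara_ge
  have hδ0 : δ ≠ 0 := hδpos.ne'
  have h2r1 : (2*r - δ) ≠ 0 := ne_of_gt (by linarith)
  have h2r2 : (2*r + δ) ≠ 0 := by positivity
  have hA : r/(δ*(2*r-δ)) - 1/(2*δ) = 1/(2*(2*r-δ)) := by
    rw [div_sub_div _ _ (mul_ne_zero hδ0 h2r1) (mul_ne_zero two_ne_zero hδ0),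
      div_eq_div_iff (mul_ne_zero (mul_ne_zero hδ0 h2r1) (mul_ne_zero two_ne_zero hδ0))
        (mul_ne_zero two_ne_zero h2r1)]
    ring
  have hB : 1/(2*δ) - r/(δ*(2*r+δ)) = 1/(2*(2*r+δ)) := by
    rw [div_sub_div _ _ (mul_ne_zero two_ne_zero hδ0) (mul_ne_zero hδ0 h2r2),
      div_eq_div_iff (mul_ne_zero (mul_ne_zero two_ne_zero hδ0) (mul_ne_zero hδ0 h2r2))
        (mul_ne_zero two_ne_zero h2r2)]
    ring
  have hA' : 1/(2*(2*r-δ)) ≤ 1/r := by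
    apply one_div_le_one_div_of_le hrpos
    linarith
  have hB' : 1/(2*(2*r+δ)) ≤ 1/r := by
    apply one_div_le_one_div_of_le hrpos
    linarith
  rw [abs_le]
  constructor
  · linarith
  · linarith
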